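/- Let G be a connected simple graph and H a subgraph of G with strictly fewer vertices than G, where H is a (not necessarily induced) subgraph. Then min{ k_i(H) : i a vertex of H, k_i(H) > 1 } < min{ k_i(G) : i ∈ V(G), k_i(G) > 1 }, provided both minima are taken over nonempty sets; that is, the quantity min_{k_i>1} k_i − 1 is strictly smaller for H than for G. -/

import Mathlib

/-!
Fix `m` in `H` with `k_m(H) > 1`; every vertex `a` of its component `C` then has `k_a(H) > 1`.
For any vertex `j` of `G` pick `a ∈ C` and a connected `P ∋ j` of `G` meeting `C` only in `a`:
`P = {j}` if `j ∈ C`, otherwise the part of a `G`-walk from `j` to `m` before it first enters `C`.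
Then `I ↦ I ∪ P` injects the connected sets of `H` through `a` into those of `G` through `j`,
missing `V(G)` (as `H` lacks a vertex) in the first case and `{j}` in the second.
So `k_a(H) < k_j(G)`; take `j` minimizing `k_j(G)`.
-/

open scoped Classical

/-- `k_i(Γ)` for a graph `Γ` on a finite vertex type: the number of vertex
subsets `I` containing `i` whose induced subgraph is connected. -/
noncomputable def kOf {V : Type*} [Fintype V] (G : SimpleGraph V) (i : V) : ℕ :=
  (Finset.univ.filter fun I : Finset V =>
    i ∈ I ∧ (G.induce (I : Set V)).Connected).card

open Finset SimpleGraph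

theorem SimpleGraph.connected_induce_singleton {V : Type*} (G : SimpleGraph V) (v : V) :
    (G.induce {v}).Connected := by
  rw [induce_singleton_eq_top]
  exact connected_top

theorem SimpleGraph.Connected.induce_image {U V : Type*} {H : SimpleGraph U} {G : SimpleGraph V}
    (f : H →g G) {s : Set U} (hs : (H.induce s).Connected) : (G.induce (f '' s)).Connected :=
  hs.map (induceHom f (Set.mapsTo_image f s)) fun ⟨_, x, hx, rfl⟩ => ⟨⟨x, hx⟩, rfl⟩

theorem SimpleGraph.Walk.exists_connected_prefix {V : Type*} {G : SimpleGraph V} {C : Set V}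
    {j t : V} (w : G.Walk j t) (ht : t ∈ C) :
    ∃ P : Finset V, ∃ a ∈ C, j ∈ P ∧ (P : Set V) ∩ C = {a} ∧
      (G.induce (P : Set V)).Connected := by
  have stop_at (u : V) (hu : u ∈ C) : ∃ P : Finset V, ∃ a ∈ C, u ∈ P ∧
      (P : Set V) ∩ C = {a} ∧ (G.induce (P : Set V)).Connected :=
    ⟨{u}, u, hu, mem_singleton_self u, by simpa using hu,
      by rw [coe_singleton]; exact G.connected_induce_singleton u⟩
  induction w with
  | nil => exact stop_at _ ht
  | @cons u v t huv p ih =>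
    by_cases hu : u ∈ C
    · exact stop_at u hu
    obtain ⟨P, a, haC, hvP, hPC, hP⟩ := ih ht
    refine ⟨insert u P, a, haC, mem_insert_self u P, ?_, ?_⟩
    · rw [coe_insert, Set.insert_inter_of_notMem hu, hPC]
    · have := induce_union_connected (induce_pair_connected_of_adj huv).preconnected
        hP.preconnected ⟨v, by simp, hvP⟩
      rwa [Set.insert_union, Set.union_eq_right.mpr (Set.singleton_subset_iff.mpr hvP),
        ← coe_insert] at this

section ConnectedSets

variable {U V : Type*} [Fintype U] [Fintype V] {H : SimpleGraph U} {G : SimpleGraph V}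

noncomputable def connectedSets (G : SimpleGraph V) (i : V) : Finset (Finset V) :=
  univ.filter fun I : Finset V => i ∈ I ∧ (G.induce (I : Set V)).Connected

lemma kOf_eq_card_connectedSets (G : SimpleGraph V) (i : V) :
    kOf G i = #(connectedSets G i) := rfl

lemma mem_connectedSets {i : V} {I : Finset V} :
    I ∈ connectedSets G i ↔ i ∈ I ∧ (G.induce (I : Set V)).Connected := by
  simp [connectedSets]

lemma singleton_mem_connectedSets (G : SimpleGraph V) (v : V) : {v} ∈ connectedSets G v := by
  rw [mem_connectedSets, coe_singleton]
  exact ⟨mem_singleton_self v, G.connected_induce_singleton v⟩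

lemma univ_mem_connectedSets (hG : G.Connected) (v : V) : univ ∈ connectedSets G v := by
  rw [mem_connectedSets, coe_univ]
  exact ⟨mem_univ v, G.induceUnivIso.connected_iff.mpr hG⟩

lemma coe_subset_supp_of_mem_connectedSets {i : V} {I : Finset V}
    (hI : I ∈ connectedSets G i) : (I : Set V) ⊆ (G.connectedComponentMk i).supp := by
  rw [mem_connectedSets] at hI
  intro x hx
  exact ConnectedComponent.sound
    ((hI.2.preconnected ⟨x, hx⟩ ⟨i, hI.1⟩).map (Embedding.induce _).toHom)

lemma one_lt_kOf_of_reachable {m x : V} (hr : G.Reachable m x) (hm : 1 < kOf G m) :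
    1 < kOf G x := by
  obtain rfl | hmx := eq_or_ne m x
  · exact hm
  obtain ⟨w⟩ := hr.symm
  rw [kOf_eq_card_connectedSets, one_lt_card]
  refine ⟨{x}, singleton_mem_connectedSets G x, w.support.toFinset, ?_, ?_⟩
  · rw [mem_connectedSets, List.coe_toFinset]
    exact ⟨List.mem_toFinset.mpr w.start_mem_support, w.connected_induce_support⟩
  · intro h
    exact hmx (mem_singleton.mp (h ▸ List.mem_toFinset.mpr w.end_mem_support))

/-- `I ↦ f '' I ∪ P` is injective on the connected sets through `a`: intersecting with the image
of the component of `a` gives back `f '' I`. -/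
lemma kOf_lt_kOf_of_inter_eq_singleton (f : H →g G) (hf : Function.Injective f) {a : U} {j : V}
    {P : Finset V} (hjP : j ∈ P) (hP : (G.induce (P : Set V)).Connected)
    (hPC : (P : Set V) ∩ f '' (H.connectedComponentMk a).supp = {f a})
    {J : Finset V} (hJ : J ∈ connectedSets G j)
    (hJP : ∀ I ∈ connectedSets H a, I.image f ∪ P ≠ J) :
    kOf H a < kOf G j := by
  set glue : Finset U → Finset V := fun I => I.image f ∪ P
  have hfaP : f a ∈ P := (hPC.symm.subset rfl).1
  have maps : Set.MapsTo glue (connectedSets H a) (connectedSets G j) := by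
    intro I hI
    have hI' := mem_connectedSets.mp hI
    refine mem_connectedSets.mpr ⟨mem_union_right _ hjP, ?_⟩
    rw [coe_union, coe_image]
    exact induce_union_connected (hI'.2.induce_image f).preconnected hP.preconnected
      ⟨f a, ⟨a, hI'.1, rfl⟩, hfaP⟩
  have recover : ∀ I ∈ connectedSets H a,
      (glue I : Set V) ∩ f '' (H.connectedComponentMk a).supp = f '' I := by
    intro I hI
    have hsub := Set.image_mono (f := f) (coe_subset_supp_of_mem_connectedSets hI)
    have hfa : {f a} ⊆ f '' I :=
      Set.singleton_subset_iff.mpr ⟨a, (mem_connectedSets.mp hI).1, rfl⟩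
    rw [coe_union, coe_image, Set.union_inter_distrib_right, hPC,
      Set.inter_eq_self_of_subset_left hsub, Set.union_eq_left.mpr hfa]
  have inj : Set.InjOn glue (connectedSets H a) := fun I hI I' hI' h =>
    coe_injective (hf.image_injective (by rw [← recover I hI, ← recover I' hI', h]))
  rw [kOf_eq_card_connectedSets, kOf_eq_card_connectedSets, ← card_image_of_injOn inj]
  refine card_lt_card ((ssubset_iff_of_subset ?_).mpr ⟨J, hJ, ?_⟩)
  · exact image_subset_iff.mpr maps
  · simpa using hJP

theorem exists_one_lt_kOf_lt_kOf (hG : G.Connected) (f : H →g G) (hf : Function.Injective f)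
    (hfs : ¬ Function.Surjective f) {m : U} (hm : 1 < kOf H m) (j : V) :
    ∃ a, 1 < kOf H a ∧ kOf H a < kOf G j := by
  set C := f '' (H.connectedComponentMk m).supp
  by_cases hjC : j ∈ C
  · obtain ⟨a, hma, rfl⟩ := hjC
    rw [ConnectedComponent.mem_supp_iff, ConnectedComponent.eq] at hma
    refine ⟨a, one_lt_kOf_of_reachable hma.symm hm, ?_⟩
    refine kOf_lt_kOf_of_inter_eq_singleton f hf (mem_singleton_self (f a))
      (by rw [coe_singleton]; exact G.connected_induce_singleton (f a)) ?_
      (univ_mem_connectedSets hG (f a)) ?_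
    · rw [coe_singleton]
      exact Set.singleton_inter_of_mem ⟨a, rfl, rfl⟩
    · obtain ⟨v, hv⟩ := not_forall.mp hfs
      intro I _ h
      have : v ∈ I.image f ∪ {f a} := h ▸ mem_univ v
      simp only [mem_union, mem_image, mem_singleton] at this
      obtain ⟨x, -, rfl⟩ | rfl := this
      exacts [hv ⟨x, rfl⟩, hv ⟨a, rfl⟩]
  · obtain ⟨w⟩ := hG.preconnected j (f m)
    obtain ⟨P, _, ⟨a, hma, rfl⟩, hjP, hPC, hP⟩ :=
      w.exists_connected_prefix (C := C) ⟨m, rfl, rfl⟩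
    rw [ConnectedComponent.mem_supp_iff] at hma
    refine ⟨a, one_lt_kOf_of_reachable (ConnectedComponent.exact hma.symm) hm,
      kOf_lt_kOf_of_inter_eq_singleton f hf hjP hP (by rwa [hma])
        (singleton_mem_connectedSets G j) ?_⟩
    intro I _ h
    have hfaj : f a = j := mem_singleton.mp (h ▸ mem_union_right _ (hPC.symm.subset rfl).1)
    exact hjC (hfaj ▸ ⟨a, hma, rfl⟩)

end ConnectedSets

/-- Let `G` be a connected simple graph and `H` a (not
necessarily induced) subgraph of `G` with strictly fewer vertices, such that
both graphs have some vertex with `k_i > 1`. Then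
`min { k_i(H) : k_i(H) > 1 } < min { k_i(G) : k_i(G) > 1 }`. -/
theorem min_kOf_strict_subgraph_lt {V : Type*} [Fintype V] (G : SimpleGraph V)
    (hG : G.Connected)
    (W : Finset V) (H : SimpleGraph {x // x ∈ W})
    (hsub : ∀ a b : {x // x ∈ W}, H.Adj a b → G.Adj a.1 b.1)
    (hcard : W.card < Fintype.card V)
    (hH : ∃ m : {x // x ∈ W}, 1 < kOf H m)
    (hGk : ∃ j : V, 1 < kOf G j) :
    sInf {k : ℕ | ∃ i : {x // x ∈ W}, 1 < kOf H i ∧ kOf H i = k} <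
      sInf {k : ℕ | ∃ j : V, 1 < kOf G j ∧ kOf G j = k} := by
  obtain ⟨m, hm⟩ := hH
  obtain ⟨j, hj⟩ := hGk
  obtain ⟨j₀, -, hj₀⟩ :=
    Nat.sInf_mem (s := {k : ℕ | ∃ j : V, 1 < kOf G j ∧ kOf G j = k}) ⟨_, j, hj, rfl⟩
  have val_not_surjective : ¬ Function.Surjective (Subtype.val : W → V) := fun hs =>
    hcard.not_ge ((Fintype.card_le_of_surjective _ hs).trans_eq (Fintype.card_coe W))
  obtain ⟨a, ha, hlt⟩ := exists_one_lt_kOf_lt_kOf hG ⟨Subtype.val, hsub _ _⟩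
    Subtype.val_injective val_not_surjective hm j₀
  calc sInf {k : ℕ | ∃ i : {x // x ∈ W}, 1 < kOf H i ∧ kOf H i = k}
      ≤ kOf H a := Nat.sInf_le ⟨a, ha, rfl⟩
    _ < kOf G j₀ := hlt
    _ = _ := hj₀
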